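/- Fix an interval Λ regarded as a ring and suppose |λ|² < (κ−2)/(2κ). Then for any ν > 1 with ν|Λ| ∈ ℕ, the ground-state energy of H_Λ^per in the ν|Λ|-particle sector satisfies E₀(ν|Λ|) ≥ ν|Λ|·[ ν(1 + κ/2 − κ|λ|²) − κ/2 ], where E₀(N) := inf{⟨ψ|H_Λ^per ψ⟩/‖ψ‖² : 0 ≠ ψ ∈ dom(H_Λ^per) with ψ(μ) = 0 unless Σ_{x∈Λ} μ_x = N}. -/

import Mathlib

open scoped ENNReal NNReal Classical

namespace Bose

/-- Particle configurations on the one-dimensional lattice `ℤ`. -/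
abbrev Config := ℤ → ℕ

/-- A configuration is supported on the interval `[a,b]`. -/
def SupportedOn (a b : ℤ) (μ : Config) : Prop := ∀ x : ℤ, x < a ∨ b < x → μ x = 0

/-- Add `n` particles at site `x`. -/
def addAt (x : ℤ) (n : ℕ) (μ : Config) : Config := fun y => if y = x then μ y + n else μ y

/-- Remove `n` particles at site `x` (truncated subtraction). -/
def subAt (x : ℤ) (n : ℕ) (μ : Config) : Config := fun y => if y = x then μ y - n else μ y

/-- The configuration basis vector `|μ⟩` of the bosonic Fock space. -/
noncomputable def ket (μ : Config) : Config → ℂ := fun ν => if ν = μ then 1 else 0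

/-- The ℓ²-inner product `⟨φ|ψ⟩` (junk value when not summable). -/
noncomputable def inner' (φ ψ : Config → ℂ) : ℂ :=
  ∑' μ : Config, (starRingEnd ℂ) (φ μ) * ψ μ

/-- `‖z‖²` as an extended nonnegative real. -/
noncomputable def en2 (z : ℂ) : ℝ≥0∞ := (‖z‖₊ : ℝ≥0∞) ^ 2

/-- Squared ℓ²-norm, valued in `ℝ≥0∞`. -/
noncomputable def normSq (ψ : Config → ℂ) : ℝ≥0∞ := ∑' μ : Config, en2 (ψ μ)

noncomputable def sqrt2C : ℂ := (Real.sqrt 2 : ℂ)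

/-- The hopping operator `q_x` (open boundary conditions / infinite lattice). -/
noncomputable def qOp (lam : ℂ) (x : ℤ) (ψ : Config → ℂ) (ν : Config) : ℂ :=
  (Real.sqrt (((ν x + 1) * (ν x + 2) : ℕ) : ℝ) : ℂ) * ψ (addAt x 2 ν)
    - lam * (Real.sqrt (((ν (x - 1) + 1) * (ν (x + 1) + 1) : ℕ) : ℝ) : ℂ) *
        ψ (addAt (x - 1) 1 (addAt (x + 1) 1 ν))

/-- The adjoint `q_x^*`. -/
noncomputable def qStar (lam : ℂ) (x : ℤ) (φ : Config → ℂ) (μ : Config) : ℂ :=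
  (Real.sqrt ((μ x * (μ x - 1) : ℕ) : ℝ) : ℂ) * φ (subAt x 2 μ)
    - (starRingEnd ℂ) lam * (Real.sqrt ((μ (x - 1) * μ (x + 1) : ℕ) : ℝ) : ℂ) *
        φ (subAt (x - 1) 1 (subAt (x + 1) 1 μ))

/-- Electrostatic energy `e_Λ^obc(μ)`. -/
noncomputable def eObc (a b : ℤ) (μ : Config) : ℕ := ∑ x ∈ Finset.Icc a (b - 1), μ x * μ (x + 1)

/-- The open boundary energy form `⟨ψ|H_Λ ψ⟩`, valued in `ℝ≥0∞`. -/
noncomputable def energyObc (a b : ℤ) (κ : ℝ) (lam : ℂ) (ψ : Config → ℂ) : ℝ≥0∞ :=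
  (∑' μ : Config, (eObc a b μ : ℝ≥0∞) * en2 (ψ μ))
    + ENNReal.ofReal κ * ∑ x ∈ Finset.Icc (a + 1) (b - 1), ∑' ν : Config, en2 (qOp lam x ψ ν)

/-- Membership in the bosonic Fock space `ℋ_Λ` for `Λ = [a,b]`. -/
def MemH (a b : ℤ) (ψ : Config → ℂ) : Prop :=
  normSq ψ ≠ ∞ ∧ ∀ μ : Config, ¬ SupportedOn a b μ → ψ μ = 0

/-- Ground states of `H_Λ` (frustration-free: zero energy). -/
def IsGroundObc (a b : ℤ) (κ : ℝ) (lam : ℂ) (ψ : Config → ℂ) : Prop :=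
  MemH a b ψ ∧ energyObc a b κ lam ψ = 0

/-- Orthogonality to the ground state space `𝒢_Λ`. -/
def OrthoG (a b : ℤ) (κ : ℝ) (lam : ℂ) (ψ : Config → ℂ) : Prop :=
  ∀ φ, IsGroundObc a b κ lam φ → inner' φ ψ = 0

/-- The spectral gap `E₁^obc(ℋ_Λ)` above the ground-state space. -/
noncomputable def E1obc (a b : ℤ) (κ : ℝ) (lam : ℂ) : ℝ≥0∞ :=
  ⨅ ψ : {ψ : Config → ℂ // MemH a b ψ ∧ energyObc a b κ lam ψ ≠ ∞ ∧ normSq ψ ≠ 0 ∧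
      OrthoG a b κ lam ψ},
    energyObc a b κ lam ψ.1 / normSq ψ.1

/-- The Hamiltonian `H_Λ`, acting pointwise. -/
noncomputable def Hop (a b : ℤ) (κ : ℝ) (lam : ℂ) (ψ : Config → ℂ) : Config → ℂ :=
  fun μ => (eObc a b μ : ℂ) * ψ μ
    + (κ : ℂ) * ∑ x ∈ Finset.Icc (a + 1) (b - 1), qStar lam x (qOp lam x ψ) μ

/-! ### Periodic boundary conditions -/

/-- Position `x` wrapped into the ring `[a,b]`. -/
def wrap (a b x : ℤ) : ℤ := a + (x - a) % (b - a + 1)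

/-- The hopping operator `q_x` with periodic boundary conditions. -/
noncomputable def qPer (a b : ℤ) (lam : ℂ) (x : ℤ) (ψ : Config → ℂ) (ν : Config) : ℂ :=
  (Real.sqrt (((ν x + 1) * (ν x + 2) : ℕ) : ℝ) : ℂ) * ψ (addAt x 2 ν)
    - lam * (Real.sqrt (((ν (wrap a b (x - 1)) + 1) * (ν (wrap a b (x + 1)) + 1) : ℕ) : ℝ) : ℂ) *
        ψ (addAt (wrap a b (x - 1)) 1 (addAt (wrap a b (x + 1)) 1 ν))

/-- Electrostatic energy `e_Λ^per(μ)`. -/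
noncomputable def ePer (a b : ℤ) (μ : Config) : ℕ := ∑ x ∈ Finset.Icc a b, μ x * μ (wrap a b (x + 1))

/-- The periodic energy form `⟨ψ|H_Λ^per ψ⟩`. -/
noncomputable def energyPer (a b : ℤ) (κ : ℝ) (lam : ℂ) (ψ : Config → ℂ) : ℝ≥0∞ :=
  (∑' μ : Config, (ePer a b μ : ℝ≥0∞) * en2 (ψ μ))
    + ENNReal.ofReal κ * ∑ x ∈ Finset.Icc a b, ∑' ν : Config, en2 (qPer a b lam x ψ ν)

def IsGroundPer (a b : ℤ) (κ : ℝ) (lam : ℂ) (ψ : Config → ℂ) : Prop :=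
  MemH a b ψ ∧ energyPer a b κ lam ψ = 0

def OrthoGPer (a b : ℤ) (κ : ℝ) (lam : ℂ) (ψ : Config → ℂ) : Prop :=
  ∀ φ, IsGroundPer a b κ lam φ → inner' φ ψ = 0

/-- The spectral gap `E₁^per(ℋ_Λ)`. -/
noncomputable def E1per (a b : ℤ) (κ : ℝ) (lam : ℂ) : ℝ≥0∞ :=
  ⨅ ψ : {ψ : Config → ℂ // MemH a b ψ ∧ energyPer a b κ lam ψ ≠ ∞ ∧ normSq ψ ≠ 0 ∧
      OrthoGPer a b κ lam ψ},
    energyPer a b κ lam ψ.1 / normSq ψ.1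

/-! ### The constants `γ` and the function `f` -/

noncomputable def gammaPer (κ s : ℝ) : ℝ :=
  (1 / 4) * min 1 (min (2 * κ / (κ + 1)) (2 * κ / (1 + κ * s)))

noncomputable def gammaObc (κ s : ℝ) : ℝ :=
  (1 / 5) * min (4 * gammaPer κ s) (2 * κ * s / (κ + 1))

noncomputable def gammaKappa (κ s : ℝ) : ℝ :=
  (1 / 5) * min 1 (min (2 * κ / (1 + κ * s)) (min (2 * κ / (κ + 1)) (2 * κ * s / (κ + 1))))

noncomputable def seqA (r : ℝ) : ℕ → ℝ
  | 0 => 1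
  | 1 => 1
  | n + 2 => seqA r (n + 1) + r * seqA r n

noncomputable def betaSeq (r : ℝ) (n : ℕ) : ℝ := seqA r (n - 1) / seqA r n

noncomputable def fN (r : ℝ) (n : ℕ) : ℝ :=
  r * betaSeq r n * betaSeq r (n - 2) *
    ((1 - betaSeq r (n - 1) * (1 + r)) ^ 2 / (1 + 2 * r)
      + 2 * (1 - betaSeq r (n - 1)) ^ 2 / (1 + r))

/-- `f(r) = sup_{n ≥ 4} f_n(r)`. -/
noncomputable def fFun (r : ℝ) : ℝ := ⨆ n : {m : ℕ // 4 ≤ m}, fN r n.1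

/-! ### BVMD tilings (open boundary conditions) -/

def tileV : List ℕ := [0]
def tileM : List ℕ := [1, 0]
def tileD : List ℕ := [0, 2, 0, 0]
def tileM1 : List ℕ := [1]
def tileD1 : List ℕ := [0, 2, 0]
def tileBl (n : ℕ) : List ℕ := [n, 0, 0]
def tileBr (n : ℕ) : List ℕ := [0, n]

def IsBulkTile (t : List ℕ) : Prop := t = tileV ∨ t = tileM ∨ t = tileD

def IsLeftTile (t : List ℕ) : Prop := IsBulkTile t ∨ ∃ n, 2 ≤ n ∧ t = tileBl n

def IsRightTile (t : List ℕ) : Prop :=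
  IsBulkTile t ∨ t = tileM1 ∨ t = tileD1 ∨ ∃ n, 2 ≤ n ∧ t = tileBr n

/-- Only the first (resp. last) tile may be a left (resp. right) boundary tile. -/
def TilingShape (T : List (List ℕ)) : Prop :=
  T ≠ [] ∧ ∀ i : Fin T.length,
    IsBulkTile (T.get i) ∨ ((i : ℕ) = 0 ∧ IsLeftTile (T.get i)) ∨
      ((i : ℕ) = T.length - 1 ∧ IsRightTile (T.get i))

/-- A BVMD tiling of the interval `[a,b]`. -/
def IsBVMD (a b : ℤ) (T : List (List ℕ)) : Prop :=
  TilingShape T ∧ (T.flatten.length : ℤ) = b - a + 1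

/-- The configuration obtained by laying down the occupation string `l` starting at `p`. -/
def listConfig (p : ℤ) (l : List ℕ) : Config :=
  fun x => if p ≤ x then l.getD (x - p).toNat 0 else 0

/-- The configuration `σ_Λ(T)` of a tiling `T` of an interval starting at `a`. -/
def sigmaT (a : ℤ) (T : List (List ℕ)) : Config := listConfig a T.flatten

/-- Equivalence generated by a one-step relation. -/
def Conn {α : Type*} (r : α → α → Prop) : α → α → Prop :=
  Relation.ReflTransGen (fun x y => r x y ∨ r y x)

/-- The substitution rules `(10)(10) ↔ (0200)` and `(10)(1) ↔ (020)`. -/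
inductive TileStep : List (List ℕ) → List (List ℕ) → Prop
  | dimer (pre post : List (List ℕ)) :
      TileStep (pre ++ [tileM, tileM] ++ post) (pre ++ [tileD] ++ post)
  | dimer1 (pre post : List (List ℕ)) :
      TileStep (pre ++ [tileM, tileM1] ++ post) (pre ++ [tileD1] ++ post)

/-- Two tilings are connected iff related by finitely many substitutions. -/
def TConn : List (List ℕ) → List (List ℕ) → Prop := Conn TileStep

/-- A root tiling: a BVMD tiling containing no dimer `D` or `D^{(1)}`. -/
def IsRootT (a b : ℤ) (R : List (List ℕ)) : Prop :=
  IsBVMD a b R ∧ tileD ∉ R ∧ tileD1 ∉ R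

/-- `ℤ`-induced (bulk) root tilings `ℛ_Λ^∞`. -/
def IsRootInf (a b : ℤ) (R : List (List ℕ)) : Prop :=
  IsRootT a b R ∧
    (R.head? = some tileV ∨ R.head? = some tileM ∨ R.head? = some (tileBl 2)) ∧
    (R.getLast? = some tileV ∨ R.getLast? = some tileM ∨ R.getLast? = some tileM1 ∨
      R.getLast? = some (tileBr 2))

/-- The number `d(T)` of dimers in a tiling. -/
def dimCount (T : List (List ℕ)) : ℕ := T.countP (fun t => t == tileD || t == tileD1)

/-- The BVMD state `ψ_Λ(R)` of a root tiling `R`. -/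
noncomputable def bvmdState (a : ℤ) (lam : ℂ) (R : List (List ℕ)) : Config → ℂ :=
  ∑ᶠ T ∈ {T : List (List ℕ) | TConn T R}, (lam / sqrt2C) ^ dimCount T • ket (sigmaT a T)

/-- The tiling space `𝒞_Λ(R)`. -/
noncomputable def Cspan (a : ℤ) (R : List (List ℕ)) : Submodule ℂ (Config → ℂ) :=
  Submodule.span ℂ {ψ | ∃ T, TConn T R ∧ ψ = ket (sigmaT a T)}

/-- Membership in the closed span `𝒞_Λ` of all BVMD tiling states. -/
def memC (a b : ℤ) (ψ : Config → ℂ) : Prop :=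
  normSq ψ ≠ ∞ ∧ ∀ μ : Config, (∀ T, IsBVMD a b T → sigmaT a T ≠ μ) → ψ μ = 0

/-- The bulk tiling space `𝒞_Λ^∞`. -/
noncomputable def CinfSub (a b : ℤ) : Submodule ℂ (Config → ℂ) :=
  Submodule.span ℂ {ψ | ∃ R T, IsRootInf a b R ∧ TConn T R ∧ ψ = ket (sigmaT a T)}

/-- The spectral gap `E₁(𝒞_Λ)` of `H_Λ` restricted to `𝒞_Λ`. -/
noncomputable def E1C (a b : ℤ) (κ : ℝ) (lam : ℂ) : ℝ≥0∞ :=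
  ⨅ ψ : {ψ : Config → ℂ // memC a b ψ ∧ normSq ψ ≠ 0 ∧ OrthoG a b κ lam ψ},
    energyObc a b κ lam ψ.1 / normSq ψ.1

/-- The spectral gap `E₁(𝒞_Λ^∞)` of `H_Λ` restricted to `𝒞_Λ^∞`. -/
noncomputable def E1CInf (a b : ℤ) (κ : ℝ) (lam : ℂ) : ℝ≥0∞ :=
  ⨅ ψ : {ψ : Config → ℂ // ψ ∈ CinfSub a b ∧ normSq ψ ≠ 0 ∧ OrthoG a b κ lam ψ},
    energyObc a b κ lam ψ.1 / normSq ψ.1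

/-- The configurations of `ℬ_Λ^∞`: tiling configurations with at most two particles per site. -/
def bulkB (a b : ℤ) (μ : Config) : Prop :=
  (∃ T, IsBVMD a b T ∧ sigmaT a T = μ) ∧ ∀ x, μ x ≤ 2

/-- Membership in the orthogonal complement `𝒞_Λ^⊥`. -/
def InCPerpObc (a b : ℤ) (ψ : Config → ℂ) : Prop :=
  ∀ T, IsBVMD a b T → ψ (sigmaT a T) = 0

/-- The ground state energy `E₀(𝒞_Λ^⊥)`. -/
noncomputable def E0perpObc (a b : ℤ) (κ : ℝ) (lam : ℂ) : ℝ≥0∞ :=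
  ⨅ ψ : {ψ : Config → ℂ // MemH a b ψ ∧ energyObc a b κ lam ψ ≠ ∞ ∧ InCPerpObc a b ψ ∧
      normSq ψ ≠ 0},
    energyObc a b κ lam ψ.1 / normSq ψ.1

/-! ### Periodic VMD tilings -/

/-- A periodic VMD tiling of the ring `[a,b]`: an exact cover of the ring by
the bulk tiles `V`, `M`, `D`, recorded by the partial function assigning to each
site the tile starting there. -/
structure PerTiling (a b : ℤ) where
  placed : ℤ → Option (List ℕ)
  supp : ∀ x : ℤ, x < a ∨ b < x → placed x = none
  bulk : ∀ x t, placed x = some t → IsBulkTile t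
  cover : ∀ y : ℤ, a ≤ y → y ≤ b →
    ∃! q : ℤ × ℕ, ∃ t, placed q.1 = some t ∧ q.2 < t.length ∧ wrap a b (q.1 + q.2) = y

/-- The configuration `σ_Λ(T)` of a periodic VMD tiling. -/
noncomputable def sigmaPer (a b : ℤ) (T : PerTiling a b) : Config := fun y =>
  if h : a ≤ y ∧ y ≤ b then
    (T.cover y h.1 h.2).choose_spec.1.choose.getD (T.cover y h.1 h.2).choose.2 0
  else 0

/-- The cyclic replacement rule `(10)(10) → (0200)`. -/
def PerStep (a b : ℤ) (T T' : PerTiling a b) : Prop :=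
  ∃ x : ℤ, T.placed x = some tileM ∧ T.placed (wrap a b (x + 2)) = some tileM ∧
    T'.placed x = some tileD ∧ T'.placed (wrap a b (x + 2)) = none ∧
    ∀ y : ℤ, y ≠ x → y ≠ wrap a b (x + 2) → T'.placed y = T.placed y

def PerConn (a b : ℤ) : PerTiling a b → PerTiling a b → Prop := Conn (PerStep a b)

/-- Periodic root tilings: only voids and monomers. -/
def IsPerRoot (a b : ℤ) (T : PerTiling a b) : Prop := ∀ x, T.placed x ≠ some tileD

/-- The number of dimers in a periodic tiling. -/
noncomputable def dimCountP (a b : ℤ) (T : PerTiling a b) : ℕ :=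
  ((Finset.Icc a b).filter fun x => T.placed x = some tileD).card

/-- The periodic VMD state `ψ_Λ^per(R)`. -/
noncomputable def perState (a b : ℤ) (lam : ℂ) (R : PerTiling a b) : Config → ℂ :=
  ∑ᶠ T ∈ {T : PerTiling a b | PerConn a b T R},
    (lam / sqrt2C) ^ dimCountP a b T • ket (sigmaPer a b T)

/-- Membership in the periodic tiling space `𝒞_Λ^per`. -/
def memCPer (a b : ℤ) (ψ : Config → ℂ) : Prop :=
  normSq ψ ≠ ∞ ∧ ∀ μ : Config, (∀ T : PerTiling a b, sigmaPer a b T ≠ μ) → ψ μ = 0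

/-- Membership in the orthogonal complement `(𝒞_Λ^per)^⊥`. -/
def InCPerpPer (a b : ℤ) (ψ : Config → ℂ) : Prop :=
  ∀ T : PerTiling a b, ψ (sigmaPer a b T) = 0

/-- The spectral gap `E₁^per(𝒞_Λ^per)`. -/
noncomputable def E1perC (a b : ℤ) (κ : ℝ) (lam : ℂ) : ℝ≥0∞ :=
  ⨅ ψ : {ψ : Config → ℂ // memCPer a b ψ ∧ normSq ψ ≠ 0 ∧ OrthoGPer a b κ lam ψ},
    energyPer a b κ lam ψ.1 / normSq ψ.1

/-- The ground state energy `E₀^per((𝒞_Λ^per)^⊥)`. -/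
noncomputable def E0perpPer (a b : ℤ) (κ : ℝ) (lam : ℂ) : ℝ≥0∞ :=
  ⨅ ψ : {ψ : Config → ℂ // MemH a b ψ ∧ energyPer a b κ lam ψ ≠ ∞ ∧ InCPerpPer a b ψ ∧
      normSq ψ ≠ 0},
    energyPer a b κ lam ψ.1 / normSq ψ.1

/-- The ground state energy of `H_Λ^per` in the `N`-particle sector. -/
noncomputable def E0sector (a b : ℤ) (κ : ℝ) (lam : ℂ) (N : ℕ) : ℝ≥0∞ :=
  ⨅ ψ : {ψ : Config → ℂ // MemH a b ψ ∧ energyPer a b κ lam ψ ≠ ∞ ∧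
      (∀ μ : Config, (∑ x ∈ Finset.Icc a b, μ x) ≠ N → ψ μ = 0) ∧ normSq ψ ≠ 0},
    energyPer a b κ lam ψ.1 / normSq ψ.1

/-- The number operator `N_Λ`. -/
noncomputable def numOp (a b : ℤ) (ψ : Config → ℂ) : Config → ℂ :=
  fun μ => ((∑ x ∈ Finset.Icc a b, μ x : ℕ) : ℂ) * ψ μ

/-- The number of particles `N_Λ(R)` in a periodic tiling. -/
noncomputable def particleNum (a b : ℤ) (T : PerTiling a b) : ℕ :=
  ∑ x ∈ Finset.Icc a b, sigmaPer a b T x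

/-! ### Tensor product machinery -/

def restrictC (a' b' : ℤ) (ν : Config) : Config := fun x => if a' ≤ x ∧ x ≤ b' then ν x else 0

def combine (a' b' : ℤ) (ν ρ : Config) : Config := fun x => if a' ≤ x ∧ x ≤ b' then ρ x else ν x

/-- Tensor product of states supported to the left/right of the cut after site `c`. -/
noncomputable def tens (c : ℤ) (ψ φ : Config → ℂ) : Config → ℂ :=
  fun ν => ψ (fun x => if x ≤ c then ν x else 0) * φ (fun x => if c < x then ν x else 0)

/-- Translation of a state by `s`. -/
noncomputable def shiftC (s : ℤ) (ψ : Config → ℂ) : Config → ℂ := fun ν => ψ (fun x => ν (x + s))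

/-- The embedding `φ ↦ |μ^l⟩ ⊗ φ ⊗ |μ^r⟩` of `ℋ_{Λ'}` into `ℋ_Λ`, with exterior
configuration given by the template `tmpl`. -/
noncomputable def embedL (a' b' : ℤ) (tmpl : Config) : (Config → ℂ) →ₗ[ℂ] (Config → ℂ) where
  toFun φ := fun ν =>
    if ∀ x : ℤ, x < a' ∨ b' < x → ν x = tmpl x then φ (restrictC a' b' ν) else 0
  map_add' φ χ := by
    funext ν
    by_cases h : ∀ x : ℤ, x < a' ∨ b' < x → ν x = tmpl x
    · simp only [Pi.add_apply, if_pos h]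
    · simp only [Pi.add_apply, if_neg h, add_zero]
  map_smul' c φ := by
    funext ν
    by_cases h : ∀ x : ℤ, x < a' ∨ b' < x → ν x = tmpl x
    · simp only [Pi.smul_apply, if_pos h, RingHom.id_apply]
    · simp only [Pi.smul_apply, if_neg h, smul_zero, RingHom.id_apply]

/-- The extension `A ⊗ 1_{Λ∖Λ'}` of an operator supported on `Λ' = [a',b']`. -/
noncomputable def extendOp (a' b' : ℤ) (A : (Config → ℂ) →ₗ[ℂ] (Config → ℂ)) :
    (Config → ℂ) →ₗ[ℂ] (Config → ℂ) where
  toFun ψ := fun ν => A (fun ρ => ψ (combine a' b' ν ρ)) (restrictC a' b' ν)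
  map_add' ψ φ := by
    funext ν
    have h : (fun ρ => (ψ + φ) (combine a' b' ν ρ))
        = (fun ρ => ψ (combine a' b' ν ρ)) + fun ρ => φ (combine a' b' ν ρ) := rfl
    show A (fun ρ => (ψ + φ) (combine a' b' ν ρ)) (restrictC a' b' ν) = _
    rw [h, map_add]; rfl
  map_smul' c ψ := by
    funext ν
    have h : (fun ρ => (c • ψ) (combine a' b' ν ρ))
        = c • fun ρ => ψ (combine a' b' ν ρ) := rfl
    show A (fun ρ => (c • ψ) (combine a' b' ν ρ)) (restrictC a' b' ν) = _
    rw [h, map_smul]; rfl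

/-- The square of the operator norm of `A` restricted to the subspace `S`. -/
noncomputable def opNormSqOn (S : Submodule ℂ (Config → ℂ))
    (A : (Config → ℂ) →ₗ[ℂ] (Config → ℂ)) : ℝ≥0∞ :=
  ⨆ ψ : {ψ : Config → ℂ // ψ ∈ S ∧ normSq ψ ≠ 0}, normSq (A ψ.1) / normSq ψ.1

/-- The left slice of `ψ` at fixed configuration `t` on the sites `> c`. -/
noncomputable def sliceL (c : ℤ) (t : Config) (ψ : Config → ℂ) : Config → ℂ :=
  fun ρ => if ∀ x : ℤ, c < x → ρ x = 0 then ψ (fun x => if x ≤ c then ρ x else t x) else 0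

/-- The right slice of `ψ` at fixed configuration `t` on the sites `< c`. -/
noncomputable def sliceR (c : ℤ) (t : Config) (ψ : Config → ℂ) : Config → ℂ :=
  fun ρ => if ∀ x : ℤ, x < c → ρ x = 0 then ψ (fun x => if c ≤ x then ρ x else t x) else 0

/-- `P` is the orthogonal projection onto the closed subspace (given by the set) `S`. -/
def IsProjOnto (P : (Config → ℂ) →ₗ[ℂ] (Config → ℂ)) (S : Set (Config → ℂ)) : Prop :=
  (∀ ψ, normSq ψ ≠ ∞ → P ψ ∈ S) ∧ (∀ ψ ∈ S, normSq ψ ≠ ∞ → P ψ = ψ) ∧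
    ∀ φ ψ, normSq φ ≠ ∞ → normSq ψ ≠ ∞ → inner' (P φ) ψ = inner' φ (P ψ)

/-! ### Squeezed Tao–Thouless states and the excited states `η`, `ξ` -/

/-- The root tiling `M_n^{(i)}` by `n` monomers, the last of length `i`. -/
def rootMon (n i : ℕ) : List (List ℕ) :=
  List.replicate (n - 1) tileM ++ [if i = 1 then tileM1 else tileM]

/-- The squeezed Tao–Thouless state `φ_n` on `[1,2n]` (`φ_0 = 1`). -/
noncomputable def phiTT (lam : ℂ) (n : ℕ) : Config → ℂ :=
  if n = 0 then ket (fun _ => 0) else bvmdState 1 lam (rootMon n 2)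

/-- The squeezed Tao–Thouless state `φ_n^{(i)}` on `[1,2(n-1)+i]`. -/
noncomputable def phiTTi (lam : ℂ) (n i : ℕ) : Config → ℂ :=
  if n = 0 then ket (fun _ => 0) else bvmdState 1 lam (rootMon n i)

/-- The norm ratio `β_n = ‖φ_{n-1}‖²/‖φ_n‖²`. -/
noncomputable def betaN (lam : ℂ) (n : ℕ) : ℝ :=
  (normSq (phiTT lam (n - 1))).toReal / (normSq (phiTT lam n)).toReal

def sigd (i : ℕ) : List ℕ := if i = 1 then [0, 2, 0] else [0, 2, 0, 0]

/-- The excited state `η_n^{(i)}`, supported on `[1, 2(n-1)+i]`. -/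
noncomputable def etaState (lam : ℂ) (n i : ℕ) : Config → ℂ :=
  (-(((starRingEnd ℂ) lam) / sqrt2C) * ((betaN lam (n - 1) : ℝ) : ℂ)) •
      tens ((2 * (n - 1) : ℕ) : ℤ) (phiTT lam (n - 1))
        (shiftC ((2 * (n - 1) : ℕ) : ℤ) (phiTTi lam 1 i))
    + tens ((2 * (n - 2) : ℕ) : ℤ) (phiTT lam (n - 2))
        (shiftC ((2 * (n - 2) : ℕ) : ℤ) (ket (listConfig 1 (sigd i))))

/-- Number of trailing monomer tiles of a root tiling. -/
def monCount (R : List (List ℕ)) : ℕ :=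
  (R.reverse.takeWhile fun t => t == tileM || t == tileM1).length

/-- Length parameter of the last monomer: `1` if it is `M^{(1)}`, else `2`. -/
def lastIdx (R : List (List ℕ)) : ℕ := if R.getLast? = some tileM1 then 1 else 2

/-- The part `R̃` of `R` before its trailing monomers. -/
def trunk (R : List (List ℕ)) : List (List ℕ) := R.take (R.length - monCount R)

/-- `ℛ_Λ^MM`: root tilings ending in two or more monomers. -/
def IsMM (R : List (List ℕ)) : Prop := 2 ≤ monCount R

/-- `R_D`: replace the two last monomers of `R` by a dimer. -/
def rootD (R : List (List ℕ)) : List (List ℕ) :=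
  R.take (R.length - 2) ++ [if R.getLast? = some tileM1 then tileD1 else tileD]

/-- The excited state `ξ_Λ(R) = ψ_{Λ(n,i)}(R̃) ⊗ η_n^{(i)}`. -/
noncomputable def xiState (a : ℤ) (lam : ℂ) (R : List (List ℕ)) : Config → ℂ :=
  tens (a + ((trunk R).flatten.length : ℤ) - 1) (bvmdState a lam (trunk R))
    (shiftC (a + ((trunk R).flatten.length : ℤ) - 1) (etaState lam (monCount R) (lastIdx R)))

/-- The subspace `𝒞_Λ^∞ ∩ (𝒢_{[a,b-2]} ⊗ ℋ_{[b-1,b]})`. -/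
def GtensorSet (a b : ℤ) (κ : ℝ) (lam : ℂ) : Set (Config → ℂ) :=
  {ψ | ψ ∈ CinfSub a b ∧ ∀ t : Config, IsGroundObc a (b - 2) κ lam (sliceL (b - 2) t ψ)}

/-! ### Invariant subspaces for excited states -/

/-- Replacement rules for the subspaces `𝒟_{l,r}^{(m)}`. -/
inductive XStep : List (List ℕ) → List (List ℕ) → Prop
  | mm (pre post : List (List ℕ)) :
      XStep (pre ++ [tileM, tileM] ++ post) (pre ++ [tileD] ++ post)
  | mm1 (pre post : List (List ℕ)) :
      XStep (pre ++ [tileM, tileM1] ++ post) (pre ++ [tileD1] ++ post)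
  | r3 (pre post : List (List ℕ)) :
      XStep (pre ++ [tileM1, tileD] ++ post) (pre ++ [[0, 2, 1, 0, 0]] ++ post)
  | r4 (pre post : List (List ℕ)) :
      XStep (pre ++ [tileD1, tileM] ++ post) (pre ++ [[0, 1, 2, 0, 0]] ++ post)

def XConn : List (List ℕ) → List (List ℕ) → Prop := Conn XStep

/-- The root tiling `R_{l,r}^{(m)} = (10)_l (01)_m (10)_r`. -/
def rootLRM (l m r : ℕ) : List (List ℕ) :=
  List.replicate l tileM ++ List.replicate m [0, 1] ++ List.replicate r tileM

/-- The invariant subspace `𝒟_{l,r}^{(m)}` on `Λ = [-2l, 2(r+m)-1]`. -/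
noncomputable def Dspace (l m r : ℕ) : Submodule ℂ (Config → ℂ) :=
  Submodule.span ℂ {ψ | ∃ T, XConn T (rootLRM l m r) ∧ ψ = ket (sigmaT (-(2 * l : ℤ)) T)}

/-- The ground state energy `E₀(𝒟_{l,r}^{(m)})`. -/
noncomputable def E0D (κ : ℝ) (lam : ℂ) (l r m : ℕ) : ℝ≥0∞ :=
  ⨅ ψ : {ψ : Config → ℂ // ψ ∈ Dspace l m r ∧ normSq ψ ≠ 0},
    energyObc (-(2 * l : ℤ)) (2 * ((r : ℤ) + m) - 1) κ lam ψ.1 / normSq ψ.1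

/-- The excited state `η_r`, supported on `[1,2r]`. -/
noncomputable def etaR (lam : ℂ) (r : ℕ) : Config → ℂ :=
  (-(((starRingEnd ℂ) lam) / sqrt2C) * ((betaN lam (r - 1) : ℝ) : ℂ)) •
      tens 2 (ket (listConfig 1 [1, 0])) (shiftC 2 (phiTT lam (r - 1)))
    + tens 4 (ket (listConfig 1 [0, 2, 0, 0])) (shiftC 4 (phiTT lam (r - 2)))

/-- The part `ψ` of the variational state, supported on `[1, 2r+3]`. -/
noncomputable def varPsiR (κ : ℝ) (lam : ℂ) (r : ℕ) : Config → ℂ :=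
  tens 3 (ket (listConfig 1 [1, 0, 1])
        + (-(sqrt2C * (κ : ℂ) * lam / ((2 * κ - 1 : ℝ) : ℂ))) • ket (listConfig 1 [0, 2, 0]))
      (shiftC 3 (phiTT lam r))
    + (-(sqrt2C * lam / ((2 * κ - 1 : ℝ) : ℂ))) •
        tens 3 (ket (listConfig 1 [1, 0, 1])) (shiftC 3 (etaR lam r))

/-- The variational state `φ_l ⊗ |0⟩ ⊗ ψ ∈ 𝒟_{l,r}^{(2)}`. -/
noncomputable def varPsi (κ : ℝ) (lam : ℂ) (l r : ℕ) : Config → ℂ :=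
  tens (-1) (shiftC (-(2 * (l : ℤ) + 1)) (phiTT lam l))
    (tens 0 (ket (fun _ => 0)) (varPsiR κ lam r))


/-! ### Auxiliary lemmas for the yrast line -/

section YrastAux

open ENNReal

lemma addAt_injective (x : ℤ) (n : ℕ) : Function.Injective (addAt x n) := by
  intro μ ν h
  funext y
  have hy := congrFun h y
  unfold addAt at hy
  by_cases hyx : y = x
  · rw [if_pos hyx, if_pos hyx] at hy; omega
  · rwa [if_neg hyx, if_neg hyx] at hy

lemma en2_eq (z : ℂ) : en2 z = ENNReal.ofReal (‖z‖ ^ 2) := by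
  rw [en2, ← ENNReal.ofReal_coe_nnreal, coe_nnnorm, ← ENNReal.ofReal_pow (norm_nonneg _)]

lemma en2_zero : en2 0 = 0 := by simp [en2_eq]

lemma en2_sqrt_mul (m : ℕ) (z : ℂ) :
    en2 ((Real.sqrt ((m : ℕ) : ℝ) : ℂ) * z) = (m : ℝ≥0∞) * en2 z := by
  rw [en2_eq, en2_eq, norm_mul, mul_pow, Complex.norm_real, Real.norm_eq_abs,
    abs_of_nonneg (Real.sqrt_nonneg _), Real.sq_sqrt (by positivity),
    ENNReal.ofReal_mul (by positivity), ENNReal.ofReal_natCast]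

lemma en2_const_mul (c z : ℂ) : en2 (c * z) = ENNReal.ofReal (‖c‖ ^ 2) * en2 z := by
  rw [en2_eq, en2_eq, norm_mul, mul_pow, ENNReal.ofReal_mul (by positivity)]

lemma en2_sub_le (u v : ℂ) : en2 u ≤ 2 * en2 (u - v) + 2 * en2 v := by
  rw [en2_eq, en2_eq, en2_eq]
  have h1 : ‖u‖ ≤ ‖u - v‖ + ‖v‖ := by
    calc ‖u‖ = ‖(u - v) + v‖ := by ring_nf
    _ ≤ ‖u - v‖ + ‖v‖ := norm_add_le _ _
  have h2 : ‖u‖ ^ 2 ≤ 2 * ‖u - v‖ ^ 2 + 2 * ‖v‖ ^ 2 := by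
    nlinarith [h1, sq_nonneg (‖u - v‖ - ‖v‖), norm_nonneg u, norm_nonneg (u - v), norm_nonneg v]
  calc ENNReal.ofReal (‖u‖ ^ 2) ≤ ENNReal.ofReal (2 * ‖u - v‖ ^ 2 + 2 * ‖v‖ ^ 2) :=
        ENNReal.ofReal_le_ofReal h2
  _ = 2 * ENNReal.ofReal (‖u - v‖ ^ 2) + 2 * ENNReal.ofReal (‖v‖ ^ 2) := by
      rw [ENNReal.ofReal_add (by positivity) (by positivity),
        ENNReal.ofReal_mul (by norm_num), ENNReal.ofReal_mul (by norm_num),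
        ENNReal.ofReal_ofNat]

lemma wrap_succ (a b x : ℤ) (hax : a ≤ x) (hxb : x ≤ b) :
    wrap a b (x + 1) = if x = b then a else x + 1 := by
  unfold wrap
  by_cases h : x = b
  · rw [if_pos h, h, show b + 1 - a = b - a + 1 by ring, Int.emod_self, add_zero]
  · rw [if_neg h, Int.emod_eq_of_lt (by omega) (by omega)]
    ring

lemma wrap_pred (a b x : ℤ) (hax : a ≤ x) (hxb : x ≤ b) :
    wrap a b (x - 1) = if x = a then b else x - 1 := by
  unfold wrap
  by_cases h : x = a
  · rw [if_pos h, h]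
    have h2 : (a - 1 - a + (b - a + 1) * 1) % (b - a + 1) = (a - 1 - a) % (b - a + 1) :=
      Int.add_mul_emod_self_left (a - 1 - a) (b - a + 1) 1
    rw [← h2, Int.emod_eq_of_lt (by omega) (by omega)]
    ring
  · rw [if_neg h, Int.emod_eq_of_lt (by omega) (by omega)]
    ring

lemma wrap_succ_mem (a b x : ℤ) (hax : a ≤ x) (hxb : x ≤ b) :
    a ≤ wrap a b (x + 1) ∧ wrap a b (x + 1) ≤ b := by
  rw [wrap_succ a b x hax hxb]
  split <;> omega

lemma wrap_pred_mem (a b x : ℤ) (hax : a ≤ x) (hxb : x ≤ b) :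
    a ≤ wrap a b (x - 1) ∧ wrap a b (x - 1) ≤ b := by
  rw [wrap_pred a b x hax hxb]
  split <;> omega

lemma sum_wrap_succ {M : Type*} [AddCommMonoid M] (a b : ℤ) (f : ℤ → M) :
    ∑ x ∈ Finset.Icc a b, f (wrap a b (x + 1)) = ∑ x ∈ Finset.Icc a b, f x := by
  rcases le_or_gt a b with hab | hab
  · have hrw : ∀ x ∈ Finset.Icc a b,
        f (wrap a b (x + 1)) = f (if x = b then a else x + 1) := by
      intro x hx
      rw [Finset.mem_Icc] at hx
      rw [wrap_succ a b x hx.1 hx.2]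
    rw [Finset.sum_congr rfl hrw]
    refine Finset.sum_nbij' (fun x => if x = b then a else x + 1)
      (fun x => if x = a then b else x - 1) ?_ ?_ ?_ ?_ ?_ <;>
        intro x hx <;> rw [Finset.mem_Icc] at hx
    · rw [Finset.mem_Icc]; split_ifs <;> omega
    · rw [Finset.mem_Icc]; split_ifs <;> omega
    · split_ifs <;> omega
    · split_ifs <;> omega
  · rw [Finset.Icc_eq_empty (by omega)]
    simp

lemma sum_wrap_pred {M : Type*} [AddCommMonoid M] (a b : ℤ) (f : ℤ → M) :
    ∑ x ∈ Finset.Icc a b, f (wrap a b (x - 1)) = ∑ x ∈ Finset.Icc a b, f x := by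
  rcases le_or_gt a b with hab | hab
  · have hrw : ∀ x ∈ Finset.Icc a b,
        f (wrap a b (x - 1)) = f (if x = a then b else x - 1) := by
      intro x hx
      rw [Finset.mem_Icc] at hx
      rw [wrap_pred a b x hx.1 hx.2]
    rw [Finset.sum_congr rfl hrw]
    refine Finset.sum_nbij' (fun x => if x = a then b else x - 1)
      (fun x => if x = b then a else x + 1) ?_ ?_ ?_ ?_ ?_ <;>
        intro x hx <;> rw [Finset.mem_Icc] at hx
    · rw [Finset.mem_Icc]; split_ifs <;> omega
    · rw [Finset.mem_Icc]; split_ifs <;> omega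
    · split_ifs <;> omega
    · split_ifs <;> omega
  · rw [Finset.Icc_eq_empty (by omega)]
    simp

lemma nat_pred_cast (m : ℕ) : ((m * (m - 1) : ℕ) : ℝ) = (m : ℝ) * ((m : ℝ) - 1) := by
  cases m with
  | zero => simp
  | succ k => push_cast [Nat.succ_sub_one]; ring

/-- Step A: diagonal lower bound for the hopping term, per site. -/
lemma stepA (a b : ℤ) (lam : ℂ) (x : ℤ) (ψ : Config → ℂ) :
    ∑' μ : Config, ((μ x * (μ x - 1) : ℕ) : ℝ≥0∞) * en2 (ψ μ)
      ≤ 2 * (∑' ν : Config, en2 (qPer a b lam x ψ ν))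
        + 2 * ENNReal.ofReal (‖lam‖ ^ 2) *
          ∑' μ : Config, ((μ (wrap a b (x - 1)) * μ (wrap a b (x + 1)) : ℕ) : ℝ≥0∞)
            * en2 (ψ μ) := by
  set w1 := wrap a b (x - 1) with hw1
  set w2 := wrap a b (x + 1) with hw2
  set T : Config → Config := addAt x 2 with hTdef
  set S : Config → Config := fun ν => addAt w1 1 (addAt w2 1 ν) with hSdef
  have hT : Function.Injective T := addAt_injective x 2
  have hS : Function.Injective S :=
    (addAt_injective w1 1).comp (addAt_injective w2 1)
  have key1 : ∑' μ : Config, ((μ x * (μ x - 1) : ℕ) : ℝ≥0∞) * en2 (ψ μ)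
      = ∑' ν : Config, ((T ν x * (T ν x - 1) : ℕ) : ℝ≥0∞) * en2 (ψ (T ν)) := by
    refine (hT.tsum_eq ?_).symm
    intro μ hμ
    have hx2 : 2 ≤ μ x := by
      by_contra hc
      apply hμ
      have h01 : μ x = 0 ∨ μ x = 1 := by omega
      rcases h01 with h | h <;> simp [h]
    refine ⟨subAt x 2 μ, ?_⟩
    funext y
    by_cases hyx : y = x <;> simp [hTdef, addAt, subAt, hyx] <;> omega
  have key2 : ∀ ν : Config, ((T ν x * (T ν x - 1) : ℕ) : ℝ≥0∞) * en2 (ψ (T ν))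
      = en2 ((Real.sqrt (((ν x + 1) * (ν x + 2) : ℕ) : ℝ) : ℂ) * ψ (T ν)) := by
    intro ν
    have hTx : T ν x = ν x + 2 := by simp [hTdef, addAt]
    rw [en2_sqrt_mul, hTx, show ν x + 2 - 1 = ν x + 1 by omega,
      show (ν x + 2) * (ν x + 1) = (ν x + 1) * (ν x + 2) by ring]
  have key3 : ∀ ν : Config,
      en2 ((Real.sqrt (((ν x + 1) * (ν x + 2) : ℕ) : ℝ) : ℂ) * ψ (T ν))
        ≤ 2 * en2 (qPer a b lam x ψ ν)
          + 2 * (ENNReal.ofReal (‖lam‖ ^ 2)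
              * (((ν w1 + 1) * (ν w2 + 1) : ℕ) : ℝ≥0∞) * en2 (ψ (S ν))) := by
    intro ν
    have hq : qPer a b lam x ψ ν
        = (Real.sqrt (((ν x + 1) * (ν x + 2) : ℕ) : ℝ) : ℂ) * ψ (T ν)
          - lam * (Real.sqrt (((ν w1 + 1) * (ν w2 + 1) : ℕ) : ℝ) : ℂ) * ψ (S ν) := rfl
    have hv : en2 (lam * (Real.sqrt (((ν w1 + 1) * (ν w2 + 1) : ℕ) : ℝ) : ℂ) * ψ (S ν))
        = ENNReal.ofReal (‖lam‖ ^ 2) * (((ν w1 + 1) * (ν w2 + 1) : ℕ) : ℝ≥0∞)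
            * en2 (ψ (S ν)) := by
      rw [mul_assoc, en2_const_mul, en2_sqrt_mul, mul_assoc]
    calc en2 ((Real.sqrt (((ν x + 1) * (ν x + 2) : ℕ) : ℝ) : ℂ) * ψ (T ν))
        ≤ 2 * en2 (qPer a b lam x ψ ν)
          + 2 * en2 (lam * (Real.sqrt (((ν w1 + 1) * (ν w2 + 1) : ℕ) : ℝ) : ℂ) * ψ (S ν)) := by
          rw [hq]
          exact en2_sub_le _ _
    _ = _ := by rw [hv]
  have key4 : ∑' ν : Config, (((ν w1 + 1) * (ν w2 + 1) : ℕ) : ℝ≥0∞) * en2 (ψ (S ν))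
      ≤ ∑' μ : Config, ((μ w1 * μ w2 : ℕ) : ℝ≥0∞) * en2 (ψ μ) := by
    calc ∑' ν : Config, (((ν w1 + 1) * (ν w2 + 1) : ℕ) : ℝ≥0∞) * en2 (ψ (S ν))
        ≤ ∑' ν : Config, ((S ν w1 * S ν w2 : ℕ) : ℝ≥0∞) * en2 (ψ (S ν)) := by
          refine ENNReal.tsum_le_tsum fun ν => ?_
          refine mul_le_mul_left (Nat.cast_le.mpr ?_) _
          have h1 : ν w1 + 1 ≤ S ν w1 := by
            have hX : ν w1 ≤ addAt w2 1 ν w1 := by unfold addAt; split <;> omega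
            show ν w1 + 1 ≤ (if w1 = w1 then addAt w2 1 ν w1 + 1 else addAt w2 1 ν w1)
            rw [if_pos rfl]
            omega
          have h2 : ν w2 + 1 ≤ S ν w2 := by
            have hX : addAt w2 1 ν w2 = ν w2 + 1 := by unfold addAt; rw [if_pos rfl]
            show ν w2 + 1 ≤ (if w2 = w1 then addAt w2 1 ν w2 + 1 else addAt w2 1 ν w2)
            split <;> omega
          exact Nat.mul_le_mul h1 h2
    _ ≤ _ := tsum_comp_le_tsum_of_injective hS _
  calc ∑' μ : Config, ((μ x * (μ x - 1) : ℕ) : ℝ≥0∞) * en2 (ψ μ)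
      = ∑' ν : Config, en2 ((Real.sqrt (((ν x + 1) * (ν x + 2) : ℕ) : ℝ) : ℂ) * ψ (T ν)) := by
        rw [key1]; exact tsum_congr key2
  _ ≤ ∑' ν : Config, (2 * en2 (qPer a b lam x ψ ν)
        + 2 * (ENNReal.ofReal (‖lam‖ ^ 2)
            * (((ν w1 + 1) * (ν w2 + 1) : ℕ) : ℝ≥0∞) * en2 (ψ (S ν)))) :=
      ENNReal.tsum_le_tsum key3
  _ = 2 * (∑' ν : Config, en2 (qPer a b lam x ψ ν))
        + 2 * ENNReal.ofReal (‖lam‖ ^ 2)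
          * ∑' ν : Config, (((ν w1 + 1) * (ν w2 + 1) : ℕ) : ℝ≥0∞) * en2 (ψ (S ν)) := by
      rw [ENNReal.tsum_add, ENNReal.tsum_mul_left]
      congr 1
      rw [mul_assoc, ← ENNReal.tsum_mul_left, ← ENNReal.tsum_mul_left]
      exact tsum_congr fun ν => by ring
  _ ≤ _ := by
      refine add_le_add_right (mul_le_mul_right key4 _) _

set_option maxHeartbeats 1000000 in
/-- The per-configuration combinatorial inequality. -/
lemma config_ineq (a b : ℤ) (hab : a ≤ b) (κ r ν : ℝ) (hκ : 0 < κ) (hr : 0 ≤ r)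
    (hc : 1 < κ / 2 - κ * r) (hν : 1 < ν) (μ : Config) (N : ℕ)
    (hsum : ∑ x ∈ Finset.Icc a b, μ x = N) (hN : (N : ℝ) = ν * ((b - a + 1 : ℤ) : ℝ)) :
    ν * ((b - a + 1 : ℤ) : ℝ) * (ν * (1 + κ / 2 - κ * r) - κ / 2)
      + κ * r * ((∑ x ∈ Finset.Icc a b, μ (wrap a b (x - 1)) * μ (wrap a b (x + 1)) : ℕ) : ℝ)
      ≤ ((ePer a b μ : ℕ) : ℝ)
        + κ / 2 * ((∑ x ∈ Finset.Icc a b, μ x * (μ x - 1) : ℕ) : ℝ) := by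
  have hcard : ((Finset.Icc a b).card : ℝ) = ((b - a + 1 : ℤ) : ℝ) := by
    rw [Int.card_Icc]
    have h : (((b + 1 - a).toNat : ℤ)) = b - a + 1 := by omega
    exact_mod_cast h
  set f : ℤ → ℝ := fun x => (μ x : ℝ) with hf
  set Nr : ℝ := (N : ℝ) with hNr
  set L : ℝ := ((b - a + 1 : ℤ) : ℝ) with hLdef
  have hL1 : (1 : ℝ) ≤ L := by
    rw [hLdef]
    have : (1 : ℤ) ≤ b - a + 1 := by omega
    exact_mod_cast this
  have hfs : ∑ x ∈ Finset.Icc a b, f x = Nr := by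
    rw [hf, hNr, ← hsum]
    push_cast
    rfl
  set Q2 : ℝ := ∑ x ∈ Finset.Icc a b, f x ^ 2 with hQ2
  set P : ℝ := ∑ x ∈ Finset.Icc a b, f x * f (wrap a b (x + 1)) with hP
  set Cc : ℝ := ∑ x ∈ Finset.Icc a b, f (wrap a b (x - 1)) * f (wrap a b (x + 1)) with hCc
  have hPcast : ((ePer a b μ : ℕ) : ℝ) = P := by
    rw [ePer, hP]
    push_cast
    rfl
  have hS2cast : ((∑ x ∈ Finset.Icc a b, μ x * (μ x - 1) : ℕ) : ℝ) = Q2 - Nr := by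
    rw [Nat.cast_sum, Finset.sum_congr rfl (fun x _ => nat_pred_cast (μ x)), hQ2, ← hfs,
      ← Finset.sum_sub_distrib]
    refine Finset.sum_congr rfl fun x _ => ?_
    simp only [hf]
    ring
  have hCcast : ((∑ x ∈ Finset.Icc a b, μ (wrap a b (x - 1)) * μ (wrap a b (x + 1)) : ℕ) : ℝ)
      = Cc := by
    rw [hCc]
    push_cast
    rfl
  -- Cauchy-Schwarz facts
  have h1 : Nr ^ 2 ≤ L * Q2 := by
    have := sq_sum_le_card_mul_sum_sq (s := Finset.Icc a b) (f := f)
    rw [hfs] at this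
    calc Nr ^ 2 ≤ ((Finset.Icc a b).card : ℝ) * ∑ x ∈ Finset.Icc a b, f x ^ 2 := by
          exact_mod_cast this
    _ = L * Q2 := by rw [hcard, hQ2]
  have hwsq : ∑ x ∈ Finset.Icc a b, f (wrap a b (x + 1)) ^ 2 = Q2 := by
    rw [hQ2]
    exact sum_wrap_succ a b (fun y => f y ^ 2)
  have hwsq' : ∑ x ∈ Finset.Icc a b, f (wrap a b (x - 1)) ^ 2 = Q2 := by
    rw [hQ2]
    exact sum_wrap_pred a b (fun y => f y ^ 2)
  have hws : ∑ x ∈ Finset.Icc a b, f (wrap a b (x + 1)) = Nr := by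
    rw [← hfs]
    exact sum_wrap_succ a b f
  have h2 : 2 * Nr ^ 2 ≤ L * (Q2 + P) := by
    have hcs := sq_sum_le_card_mul_sum_sq (s := Finset.Icc a b)
      (f := fun x => f x + f (wrap a b (x + 1)))
    have hgsum : ∑ x ∈ Finset.Icc a b, (f x + f (wrap a b (x + 1))) = 2 * Nr := by
      rw [Finset.sum_add_distrib, hfs, hws]; ring
    have hgsq : ∑ x ∈ Finset.Icc a b, (f x + f (wrap a b (x + 1))) ^ 2
        = 2 * Q2 + 2 * P := by
      have : ∀ x ∈ Finset.Icc a b, (f x + f (wrap a b (x + 1))) ^ 2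
          = f x ^ 2 + f (wrap a b (x + 1)) ^ 2 + 2 * (f x * f (wrap a b (x + 1))) := by
        intro x _; ring
      rw [Finset.sum_congr rfl this, Finset.sum_add_distrib, Finset.sum_add_distrib,
        hwsq, ← Finset.mul_sum, ← hQ2, ← hP]
      ring
    rw [hgsum, hgsq, hcard] at hcs
    nlinarith [hcs]
  have h3 : Cc ≤ Q2 := by
    have ht : ∀ x ∈ Finset.Icc a b, f (wrap a b (x - 1)) * f (wrap a b (x + 1))
        ≤ (f (wrap a b (x - 1)) ^ 2 + f (wrap a b (x + 1)) ^ 2) / 2 := by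
      intro x _
      nlinarith [sq_nonneg (f (wrap a b (x - 1)) - f (wrap a b (x + 1)))]
    calc Cc ≤ ∑ x ∈ Finset.Icc a b,
          (f (wrap a b (x - 1)) ^ 2 + f (wrap a b (x + 1)) ^ 2) / 2 :=
        Finset.sum_le_sum ht
    _ = Q2 := by
        rw [← Finset.sum_div, Finset.sum_add_distrib, hwsq, hwsq']
        ring
  have hNL : ν * L = Nr := hN.symm
  have hL0 : (0 : ℝ) < L := by linarith
  have h4 : ν * Nr ≤ Q2 := by
    have : ν * Nr * L = Nr ^ 2 := by rw [← hNL]; ring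
    nlinarith [h1, hL0]
  have h5 : 2 * (ν * Nr) ≤ Q2 + P := by
    have : 2 * (ν * Nr) * L = 2 * Nr ^ 2 := by rw [← hNL]; ring
    nlinarith [h2, hL0]
  rw [hPcast, hS2cast, hCcast, hNL]
  have hA : κ * r * Cc ≤ κ * r * Q2 :=
    mul_le_mul_of_nonneg_left h3 (mul_nonneg hκ.le hr)
  have hB : (κ / 2 - κ * r - 1) * (Q2 - ν * Nr) ≥ 0 :=
    mul_nonneg (by linarith) (by linarith)
  nlinarith [hA, hB, h5]

end YrastAux

/-- **Proposition 4.2 (Yrast Line).** Fix a ring `Λ` and suppose `|λ|² < (κ−2)/(2κ)`. For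
any `ν > 1` with `ν|Λ| ∈ ℕ`, the ground-state energy of `H_Λ^per` in the `ν|Λ|`-particle
sector satisfies `E₀(ν|Λ|) ≥ ν|Λ|·[ν(1 + κ/2 − κ|λ|²) − κ/2]`. -/
theorem yrast_line (a b : ℤ) (κ : ℝ) (lam : ℂ) (hκ : 0 < κ) (hlam : lam ≠ 0)
    (hsmall : ‖lam‖ ^ 2 < (κ - 2) / (2 * κ)) (ν : ℝ) (hν : 1 < ν) (N : ℕ)
    (hN : (N : ℝ) = ν * ((b - a + 1 : ℤ) : ℝ)) :
    ENNReal.ofReal (ν * ((b - a + 1 : ℤ) : ℝ) * (ν * (1 + κ / 2 - κ * ‖lam‖ ^ 2) - κ / 2))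
      ≤ E0sector a b κ lam N := by
  set r : ℝ := ‖lam‖ ^ 2 with hrdef
  have hr : 0 ≤ r := by positivity
  have hcc : 1 < κ / 2 - κ * r := by
    have h2κ : (0 : ℝ) < 2 * κ := by linarith
    have hs2 := (lt_div_iff₀ h2κ).mp hsmall
    nlinarith
  set T : ℝ := ν * ((b - a + 1 : ℤ) : ℝ) * (ν * (1 + κ / 2 - κ * r) - κ / 2) with hTdef
  rcases le_or_gt T 0 with hT0 | hT0
  · rw [ENNReal.ofReal_eq_zero.mpr hT0]
    exact zero_le
  rw [E0sector]
  refine le_iInf ?_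
  rintro ⟨ψ, hMem, hEfin, hsec, hns⟩
  dsimp only
  obtain ⟨μ0, hμ0⟩ : ∃ μ : Config, ψ μ ≠ 0 := by
    by_contra hcon
    push_neg at hcon
    apply hns
    rw [normSq]
    simp only [hcon, en2_zero]
    exact tsum_zero
  have hμ0N : ∑ x ∈ Finset.Icc a b, μ0 x = N := by
    by_contra hcon
    exact hμ0 (hsec μ0 hcon)
  have hab : a ≤ b := by
    by_contra hcon
    push_neg at hcon
    have hIcc : Finset.Icc a b = ∅ := Finset.Icc_eq_empty (by omega)
    have hN0 : N = 0 := by rw [← hμ0N, hIcc]; simp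
    have hL0 : ((b - a + 1 : ℤ) : ℝ) = 0 := by
      have h0 : (0 : ℝ) = ν * ((b - a + 1 : ℤ) : ℝ) := by rw [← hN, hN0]; simp
      have hν0 : ν ≠ 0 := by linarith
      replace h0 := mul_eq_zero.mp h0.symm
      rcases h0 with h | h
      · exact absurd h hν0
      · push_cast
        exact_mod_cast h
    rw [hTdef, hL0, mul_zero, zero_mul] at hT0
    exact absurd hT0 (lt_irrefl 0)
  set F : Config → ℝ≥0∞ := fun μ => en2 (ψ μ) with hF
  set Q' : ℝ≥0∞ := ∑ x ∈ Finset.Icc a b, ∑' ν' : Config, en2 (qPer a b lam x ψ ν') with hQ'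
  set S2sum : ℝ≥0∞ :=
    ∑' μ : Config, ((∑ x ∈ Finset.Icc a b, μ x * (μ x - 1) : ℕ) : ℝ≥0∞) * F μ with hS2
  set Csum : ℝ≥0∞ :=
    ∑' μ : Config, ((∑ x ∈ Finset.Icc a b,
      μ (wrap a b (x - 1)) * μ (wrap a b (x + 1)) : ℕ) : ℝ≥0∞) * F μ with hCs
  set D : ℝ≥0∞ := ∑' μ : Config, (ePer a b μ : ℝ≥0∞) * F μ with hD
  have hEdef : energyPer a b κ lam ψ = D + ENNReal.ofReal κ * Q' := rfl
  -- Step A aggregated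
  have hswapS2 : S2sum
      = ∑ x ∈ Finset.Icc a b, ∑' μ : Config, ((μ x * (μ x - 1) : ℕ) : ℝ≥0∞) * F μ := by
    rw [hS2, ← Summable.tsum_finsetSum (fun i _ => ENNReal.summable)]
    refine tsum_congr fun μ => ?_
    rw [← Finset.sum_mul, Nat.cast_sum]
  have hswapC : Csum = ∑ x ∈ Finset.Icc a b, ∑' μ : Config,
      ((μ (wrap a b (x - 1)) * μ (wrap a b (x + 1)) : ℕ) : ℝ≥0∞) * F μ := by
    rw [hCs, ← Summable.tsum_finsetSum (fun i _ => ENNReal.summable)]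
    refine tsum_congr fun μ => ?_
    rw [← Finset.sum_mul, Nat.cast_sum]
  have hA : S2sum ≤ 2 * Q' + 2 * ENNReal.ofReal r * Csum := by
    rw [hswapS2, hswapC, hQ']
    calc ∑ x ∈ Finset.Icc a b, ∑' μ : Config, ((μ x * (μ x - 1) : ℕ) : ℝ≥0∞) * F μ
        ≤ ∑ x ∈ Finset.Icc a b,
          (2 * (∑' ν' : Config, en2 (qPer a b lam x ψ ν'))
            + 2 * ENNReal.ofReal r * ∑' μ : Config,
              ((μ (wrap a b (x - 1)) * μ (wrap a b (x + 1)) : ℕ) : ℝ≥0∞) * F μ) := by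
          refine Finset.sum_le_sum fun x _ => ?_
          rw [hrdef]
          exact stepA a b lam x ψ
    _ = _ := by
        rw [Finset.sum_add_distrib, ← Finset.mul_sum, ← Finset.mul_sum]
  have hA' : ENNReal.ofReal (κ / 2) * S2sum
      ≤ ENNReal.ofReal κ * Q' + ENNReal.ofReal (κ * r) * Csum := by
    have h2 : ENNReal.ofReal (κ / 2) * 2 = ENNReal.ofReal κ := by
      rw [show (2 : ℝ≥0∞) = ENNReal.ofReal 2 by norm_num,
        ← ENNReal.ofReal_mul (by linarith)]
      norm_num
    calc ENNReal.ofReal (κ / 2) * S2sum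
        ≤ ENNReal.ofReal (κ / 2) * (2 * Q' + 2 * ENNReal.ofReal r * Csum) :=
          mul_le_mul_right hA _
    _ = ENNReal.ofReal (κ / 2) * 2 * Q'
          + ENNReal.ofReal (κ / 2) * 2 * ENNReal.ofReal r * Csum := by ring
    _ = ENNReal.ofReal κ * Q' + ENNReal.ofReal (κ * r) * Csum := by
        rw [h2, ← ENNReal.ofReal_mul hκ.le]
  -- Step B aggregated
  have hB : ENNReal.ofReal T * normSq ψ + ENNReal.ofReal (κ * r) * Csum
      ≤ D + ENNReal.ofReal (κ / 2) * S2sum := by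
    have e1 : ENNReal.ofReal T * normSq ψ = ∑' μ : Config, ENNReal.ofReal T * F μ :=
      ENNReal.tsum_mul_left.symm
    have e2 : ENNReal.ofReal (κ * r) * Csum = ∑' μ : Config, ENNReal.ofReal (κ * r)
        * (((∑ x ∈ Finset.Icc a b,
            μ (wrap a b (x - 1)) * μ (wrap a b (x + 1)) : ℕ) : ℝ≥0∞) * F μ) := by
      rw [hCs, ENNReal.tsum_mul_left]
    have e3 : ENNReal.ofReal (κ / 2) * S2sum = ∑' μ : Config, ENNReal.ofReal (κ / 2)
        * (((∑ x ∈ Finset.Icc a b, μ x * (μ x - 1) : ℕ) : ℝ≥0∞) * F μ) := by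
      rw [hS2, ENNReal.tsum_mul_left]
    rw [e1, e2, e3, hD, ← ENNReal.tsum_add, ← ENNReal.tsum_add]
    refine ENNReal.tsum_le_tsum fun μ => ?_
    by_cases hψ : ψ μ = 0
    · simp [hF, hψ, en2_zero]
    · have hNμ : ∑ x ∈ Finset.Icc a b, μ x = N := by
        by_contra hcon
        exact hψ (hsec μ hcon)
      have hreal := config_ineq a b hab κ r ν hκ hr hcc hν μ N hNμ hN
      set cC : ℕ := ∑ x ∈ Finset.Icc a b, μ (wrap a b (x - 1)) * μ (wrap a b (x + 1))
      set s2 : ℕ := ∑ x ∈ Finset.Icc a b, μ x * (μ x - 1)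
      have hcoef : ENNReal.ofReal T + ENNReal.ofReal (κ * r) * (cC : ℝ≥0∞)
          ≤ (ePer a b μ : ℝ≥0∞) + ENNReal.ofReal (κ / 2) * (s2 : ℝ≥0∞) := by
        rw [show ((cC : ℕ) : ℝ≥0∞) = ENNReal.ofReal ((cC : ℕ) : ℝ) from
            (ENNReal.ofReal_natCast _).symm,
          show ((s2 : ℕ) : ℝ≥0∞) = ENNReal.ofReal ((s2 : ℕ) : ℝ) from
            (ENNReal.ofReal_natCast _).symm,
          show ((ePer a b μ : ℕ) : ℝ≥0∞) = ENNReal.ofReal ((ePer a b μ : ℕ) : ℝ) from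
            (ENNReal.ofReal_natCast _).symm,
          ← ENNReal.ofReal_mul (by positivity), ← ENNReal.ofReal_mul (by positivity),
          ← ENNReal.ofReal_add hT0.le (by positivity),
          ← ENNReal.ofReal_add (by positivity) (by positivity)]
        exact ENNReal.ofReal_le_ofReal hreal
      calc ENNReal.ofReal T * F μ + ENNReal.ofReal (κ * r) * ((cC : ℝ≥0∞) * F μ)
          = (ENNReal.ofReal T + ENNReal.ofReal (κ * r) * (cC : ℝ≥0∞)) * F μ := by ring
      _ ≤ ((ePer a b μ : ℝ≥0∞) + ENNReal.ofReal (κ / 2) * (s2 : ℝ≥0∞)) * F μ :=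
          mul_le_mul_left hcoef _
      _ = (ePer a b μ : ℝ≥0∞) * F μ
            + ENNReal.ofReal (κ / 2) * ((s2 : ℝ≥0∞) * F μ) := by ring
  -- Finiteness of the correction term
  have hCfin : Csum ≠ ∞ := by
    set M : ℕ := (b + 1 - a).toNat * (N * N) with hM
    have hbound : ∀ μ : Config,
        ((∑ x ∈ Finset.Icc a b,
          μ (wrap a b (x - 1)) * μ (wrap a b (x + 1)) : ℕ) : ℝ≥0∞) * F μ
          ≤ (M : ℝ≥0∞) * F μ := by
      intro μ
      by_cases hψ : ψ μ = 0
      · simp [hF, hψ, en2_zero]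
      · have hNμ : ∑ x ∈ Finset.Icc a b, μ x = N := by
          by_contra hcon
          exact hψ (hsec μ hcon)
        refine mul_le_mul_left (Nat.cast_le.mpr ?_) _
        calc ∑ x ∈ Finset.Icc a b, μ (wrap a b (x - 1)) * μ (wrap a b (x + 1))
            ≤ ∑ _x ∈ Finset.Icc a b, N * N := by
              refine Finset.sum_le_sum fun x hx => ?_
              rw [Finset.mem_Icc] at hx
              have hm1 : μ (wrap a b (x - 1)) ≤ N := by
                rw [← hNμ]
                exact Finset.single_le_sum (f := fun y => μ y) (fun i _ => Nat.zero_le _)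
                  (Finset.mem_Icc.mpr (wrap_pred_mem a b x hx.1 hx.2))
              have hm2 : μ (wrap a b (x + 1)) ≤ N := by
                rw [← hNμ]
                exact Finset.single_le_sum (f := fun y => μ y) (fun i _ => Nat.zero_le _)
                  (Finset.mem_Icc.mpr (wrap_succ_mem a b x hx.1 hx.2))
              exact Nat.mul_le_mul hm1 hm2
        _ = M := by
            rw [Finset.sum_const, smul_eq_mul, Int.card_Icc, hM]
    have : Csum ≤ (M : ℝ≥0∞) * normSq ψ := by
      rw [hCs, show normSq ψ = ∑' μ : Config, F μ from rfl, ← ENNReal.tsum_mul_left]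
      exact ENNReal.tsum_le_tsum hbound
    exact ne_top_of_le_ne_top (ENNReal.mul_ne_top (ENNReal.natCast_ne_top M) hMem.1) this
  have hKfin : ENNReal.ofReal (κ * r) * Csum ≠ ∞ :=
    ENNReal.mul_ne_top ENNReal.ofReal_ne_top hCfin
  have hchain : ENNReal.ofReal T * normSq ψ + ENNReal.ofReal (κ * r) * Csum
      ≤ energyPer a b κ lam ψ + ENNReal.ofReal (κ * r) * Csum := by
    calc ENNReal.ofReal T * normSq ψ + ENNReal.ofReal (κ * r) * Csum
        ≤ D + ENNReal.ofReal (κ / 2) * S2sum := hB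
    _ ≤ D + (ENNReal.ofReal κ * Q' + ENNReal.ofReal (κ * r) * Csum) :=
        add_le_add_right hA' D
    _ = energyPer a b κ lam ψ + ENNReal.ofReal (κ * r) * Csum := by
        rw [hEdef]
        ring
  have hmain : ENNReal.ofReal T * normSq ψ ≤ energyPer a b κ lam ψ :=
    (ENNReal.add_le_add_iff_right hKfin).mp hchain
  exact (ENNReal.le_div_iff_mul_le (Or.inl hns) (Or.inl hMem.1)).mpr hmain

end Bose
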